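/- Let {q_k : k ∈ ℕ} be a non-decreasing sequence of nonnegative numbers with q_0 > 0. Then there is a constant c (depending only on m) such that for every N ∈ ℕ₊, every n ≥ M_N, and every x ∈ G_m, |(1/Q_n) Σ_{j=M_N}^{n} q_{n−j} D_j(x)| ≤ (c/M_N) Σ_{j=0}^{|n|} M_j |K_{M_j}(x)|, where |n| denotes the largest index j with n_j ≠ 0 in the expansion n = Σ_j n_j M_j. -/

import Mathlib

open MeasureTheory Complex Filter Finset Topology ENNReal NNReal Asymptotics

noncomputable section

namespace Vilenkin

/-- Discrete topology on each cyclic group. -/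
instance (n : ℕ) : TopologicalSpace (ZMod n) := ⊥

instance (n : ℕ) : DiscreteTopology (ZMod n) := ⟨rfl⟩

/-- Discrete measurable structure on each cyclic group. -/
instance (n : ℕ) : MeasurableSpace (ZMod n) := ⊤

instance (n : ℕ) : BorelSpace (ZMod n) := ⟨borel_eq_top_of_discrete.symm⟩

instance (n : ℕ) : IsTopologicalAddGroup (ZMod n) :=
  { continuous_add := continuous_of_discreteTopology
    continuous_neg := continuous_of_discreteTopology }

variable (m : ℕ → ℕ)

/-- The Vilenkin group: the product of the cyclic groups `ZMod (m k)`. -/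
abbrev G := ∀ k : ℕ, ZMod (m k)

/-- The generalized powers `M_0 = 1`, `M_{k+1} = m_k M_k`. -/
def M : ℕ → ℕ
  | 0 => 1
  | k + 1 => m k * M k

/-- The `k`-th digit of `n` in the generalized number system based on `m`. -/
def digit (n k : ℕ) : ℕ := n / M m k % m k

/-- The normalized Haar (product) probability measure on the bounded Vilenkin group. -/
def haarM (hm : ∀ k, 2 ≤ m k) : Measure (G m) :=
  haveI : ∀ k, NeZero (m k) := fun k => ⟨by have := hm k; omega⟩
  haveI : ∀ k, CompactSpace (ZMod (m k)) := fun k => Finite.compactSpace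
  Measure.addHaarMeasure (⊤ : TopologicalSpace.PositiveCompacts (G m))

/-- The generalized Rademacher functions. -/
def rad (k : ℕ) (x : G m) : ℂ :=
  Complex.exp (2 * Real.pi * Complex.I * ((x k).val : ℂ) / (m k : ℂ))

/-- The Vilenkin system. -/
def psi (n : ℕ) (x : G m) : ℂ :=
  ∏ k ∈ Finset.range (n + 1), rad m k x ^ digit m n k

/-- The Dirichlet kernels. -/
def Dker (n : ℕ) (x : G m) : ℂ := ∑ k ∈ Finset.range n, psi m k x

/-- The Fejér kernels. -/
def Kker (n : ℕ) (x : G m) : ℂ := (n : ℂ)⁻¹ * ∑ k ∈ Finset.range n, Dker m k x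

/-- `Q_n = q_0 + ⋯ + q_{n-1}`. -/
def Q (q : ℕ → ℝ) (n : ℕ) : ℝ := ∑ k ∈ Finset.range n, q k

/-- The Nörlund kernels. -/
def Fker (q : ℕ → ℝ) (n : ℕ) (x : G m) : ℂ :=
  (Q q n : ℂ)⁻¹ * ∑ k ∈ Finset.Icc 1 n, (q (n - k) : ℂ) * Dker m k x

/-- The `T`-mean kernels. -/
def Tker (q : ℕ → ℝ) (n : ℕ) (x : G m) : ℂ :=
  (Q q n : ℂ)⁻¹ * ∑ k ∈ Finset.Icc 1 n, (q k : ℂ) * Dker m k x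

/-- Vilenkin-Fourier coefficients. -/
def fourierCoeff (hm : ∀ k, 2 ≤ m k) (f : G m → ℂ) (n : ℕ) : ℂ :=
  ∫ x, f x * (starRingEnd ℂ) (psi m n x) ∂(haarM m hm)

/-- Partial sums of the Vilenkin-Fourier series. -/
def S (hm : ∀ k, 2 ≤ m k) (f : G m → ℂ) (n : ℕ) (x : G m) : ℂ :=
  ∑ k ∈ Finset.range n, fourierCoeff m hm f k * psi m k x

/-- The Nörlund means. -/
def t (hm : ∀ k, 2 ≤ m k) (q : ℕ → ℝ) (n : ℕ) (f : G m → ℂ) (x : G m) : ℂ :=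
  (Q q n : ℂ)⁻¹ * ∑ k ∈ Finset.Icc 1 n, (q (n - k) : ℂ) * S m hm f k x

/-- The Vilenkin interval `I_n(x)`. -/
def cyl (n : ℕ) (x : G m) : Set (G m) := {y | ∀ j < n, y j = x j}

/-- The largest index `j` such that the digit `n_j` is nonzero (for `n ≥ 1`). -/
def ord (n : ℕ) : ℕ := Nat.findGreatest (fun j => digit m n j ≠ 0) n

/-- The element of `G_m` having `r` at the `s`-th coordinate and `0` elsewhere. -/
def spike (s r : ℕ) : G m := fun k => if k = s then (r : ZMod (m k)) else 0

/-- The operator `W_A` of Goginava and Gogoladze. -/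
def W (hm : ∀ k, 2 ≤ m k) (f : G m → ℂ) (A : ℕ) (x : G m) : ℝ :=
  ∑ s ∈ Finset.range A, (M m s : ℝ) *
    ∑ r ∈ Finset.Icc 1 (m s - 1),
      ∫ u in cyl m A (x - spike m s r), ‖f u - f x‖ ∂(haarM m hm)

/-- `x` is a Vilenkin–Lebesgue point of `f`. -/
def VilenkinLebesguePoint (hm : ∀ k, 2 ≤ m k) (f : G m → ℂ) (x : G m) : Prop :=
  Tendsto (fun A => W m hm f A x) atTop (𝓝 0)

/-- `x` is a Lebesgue point of `f`. -/
def LebesguePoint (hm : ∀ k, 2 ≤ m k) (f : G m → ℂ) (x : G m) : Prop :=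
  Tendsto (fun n => (M m n : ℂ) * ∫ u in cyl m n x, f u ∂(haarM m hm)) atTop (𝓝 (f x))

/-!
Write `L_k = D_0 + ⋯ + D_{k-1} = k K_k`. Splitting off the leading block, `k = a M_A + c`, the
identities `D_{a M_A + c} = D_{a M_A} + r_A^a D_c` and `D_{M_A} = M_A 𝟙_{I_A(0)}` give
`‖L_k‖ ≤ C ∑_{j ≤ A} ‖L_{M_j}‖` for `k ≤ M_{A+1}` by induction on `A`, with `C` depending only on
`sup m`. Since `j ↦ q_{n-j}` is non-increasing, Abel's inequality bounds the Nörlund tail by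
`2 q_{n-M_N} max_k ‖L_k‖`, and `Q_n ≥ M_N q_{n-M_N}` because the last `M_N` weights are all at
least `q_{n-M_N}`.
-/

variable {m}

@[simp] lemma M_zero : M m 0 = 1 := rfl

lemma M_succ (k : ℕ) : M m (k + 1) = m k * M m k := rfl

lemma M_pos (hm : ∀ k, 2 ≤ m k) (k : ℕ) : 0 < M m k := by
  induction k with
  | zero => simp
  | succ k ih => rw [M_succ]; exact Nat.mul_pos (by linarith [hm k]) ih

lemma lt_M (hm : ∀ k, 2 ≤ m k) (k : ℕ) : k < M m k := by
  induction k with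
  | zero => simp
  | succ k ih => rw [M_succ]; nlinarith [hm k]

lemma M_mono (hm : ∀ k, 2 ≤ m k) : Monotone (M m) :=
  monotone_nat_of_le_succ fun k => by rw [M_succ]; nlinarith [hm k]

lemma M_succ_dvd_M {k l : ℕ} (h : k < l) : M m (k + 1) ∣ M m l := by
  induction l, h using Nat.le_induction with
  | base => exact dvd_rfl
  | succ l _ ih => exact ih.trans (Dvd.intro_left _ (M_succ l).symm)

lemma mul_M_add_lt_M_succ {A a b : ℕ} (ha : a < m A) (hb : b < M m A) :
    a * M m A + b < M m (A + 1) := by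
  rw [M_succ]; nlinarith

lemma digit_eq_zero_of_lt {n k : ℕ} (h : n < M m k) : digit m n k = 0 := by
  simp [digit, Nat.div_eq_of_lt h]

lemma digit_mul_M_add (hm : ∀ k, 2 ≤ m k) {A a b : ℕ} (ha : a < m A) (hb : b < M m A) (k : ℕ) :
    digit m (a * M m A + b) k = if k = A then a else digit m b k := by
  rcases lt_trichotomy k A with hk | rfl | hk
  · obtain ⟨c, hc⟩ := M_succ_dvd_M hk
    rw [if_neg hk.ne, digit, digit, hc, M_succ, add_comm,
      show a * (m k * M m k * c) = a * c * m k * M m k by ring,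
      Nat.add_mul_div_right _ _ (M_pos hm k), Nat.add_mul_mod_self_right]
  · rw [if_pos rfl, digit, add_comm, Nat.add_mul_div_right _ _ (M_pos hm k), Nat.div_eq_of_lt hb,
      zero_add, Nat.mod_eq_of_lt ha]
  · have hMk := M_mono hm (Nat.succ_le_of_lt hk)
    rw [if_neg hk.ne', digit_eq_zero_of_lt ((mul_M_add_lt_M_succ ha hb).trans_le hMk),
      digit_eq_zero_of_lt (hb.trans_le ((M_mono hm (Nat.le_succ A)).trans hMk))]

lemma rad_eq_pow (k : ℕ) (x : G m) :
    rad m k x = Complex.exp (2 * Real.pi * Complex.I / m k) ^ (x k).val := by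
  rw [rad, ← Complex.exp_nat_mul]; ring_nf

lemma norm_rad (k : ℕ) (x : G m) : ‖rad m k x‖ = 1 := by
  rw [rad, Complex.norm_exp]
  simp

lemma rad_eq_one_iff (hm : ∀ k, 2 ≤ m k) (k : ℕ) (x : G m) : rad m k x = 1 ↔ x k = 0 := by
  have : NeZero (m k) := ⟨by linarith [hm k]⟩
  rw [rad_eq_pow, (Complex.isPrimitiveRoot_exp _ (by linarith [hm k])).pow_eq_one_iff_dvd,
    ← ZMod.natCast_eq_zero_iff, ZMod.natCast_zmod_val]

lemma sum_rad_pow (hm : ∀ k, 2 ≤ m k) (k : ℕ) (x : G m) :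
    ∑ t ∈ range (m k), rad m k x ^ t = if x k = 0 then (m k : ℂ) else 0 := by
  split_ifs with hx
  · simp [(rad_eq_one_iff hm k x).2 hx]
  · rw [geom_sum_eq (mt (rad_eq_one_iff hm k x).1 hx), rad_eq_pow, pow_right_comm,
      (Complex.isPrimitiveRoot_exp _ (by linarith [hm k])).pow_eq_one, one_pow, sub_self, zero_div]

lemma psi_eq_prod_range (hm : ∀ k, 2 ≤ m k) {n T : ℕ} (hT : n < T) (x : G m) :
    psi m n x = ∏ k ∈ range T, rad m k x ^ digit m n k := by
  refine prod_subset (range_subset_range.2 hT) fun k _ hk => ?_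
  rw [digit_eq_zero_of_lt ((by simpa using hk : n < k).trans (lt_M hm k)), pow_zero]

lemma psi_mul_M_add (hm : ∀ k, 2 ≤ m k) {A a b : ℕ} (ha : a < m A) (hb : b < M m A) (x : G m) :
    psi m (a * M m A + b) x = rad m A x ^ a * psi m b x := by
  set T := a * M m A + b + A + 1
  rw [psi_eq_prod_range hm (show _ < T by omega) x, psi_eq_prod_range hm (show b < T by omega) x]
  have hdigit : ∀ k, rad m k x ^ digit m (a * M m A + b) k
      = (if A = k then rad m A x ^ a else 1) * rad m k x ^ digit m b k := by
    intro k
    rw [digit_mul_M_add hm ha hb]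
    by_cases h : k = A
    · subst h; simp [digit_eq_zero_of_lt hb]
    · simp [h, Ne.symm h]
  simp_rw [hdigit, prod_mul_distrib, prod_ite_eq, mem_range, if_pos (show A < T by omega)]

lemma norm_psi (n : ℕ) (x : G m) : ‖psi m n x‖ = 1 := by
  simp [psi, norm_prod, norm_rad]

lemma Dker_mul_M_add (hm : ∀ k, 2 ≤ m k) {A a c : ℕ} (ha : a < m A) (hc : c ≤ M m A) (x : G m) :
    Dker m (a * M m A + c) x = Dker m (a * M m A) x + rad m A x ^ a * Dker m c x := by
  rw [Dker, Dker, Dker, sum_range_add, mul_sum]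
  congr 1
  exact sum_congr rfl fun j hj => psi_mul_M_add hm ha ((mem_range.1 hj).trans_le hc) x

lemma Dker_mul_M (hm : ∀ k, 2 ≤ m k) {A a : ℕ} (ha : a ≤ m A) (x : G m) :
    Dker m (a * M m A) x = (∑ t ∈ range a, rad m A x ^ t) * Dker m (M m A) x := by
  induction a with
  | zero => simp [Dker]
  | succ a ih =>
    rw [add_one_mul, Dker_mul_M_add hm ha le_rfl, ih (by omega), sum_range_succ]
    ring

lemma Dker_M (hm : ∀ k, 2 ≤ m k) (A : ℕ) (x : G m) :
    Dker m (M m A) x = if ∀ i < A, x i = 0 then (M m A : ℂ) else 0 := by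
  induction A with
  | zero => simp [Dker, psi, digit]
  | succ A ih =>
    rw [M_succ, Dker_mul_M hm le_rfl, sum_rad_pow hm, ih]
    simp only [Nat.forall_lt_succ_right]
    split_ifs <;> simp_all

lemma psi_eq_one_of_lt_M (hm : ∀ k, 2 ≤ m k) {A j : ℕ} (hj : j < M m A) {x : G m}
    (hx : ∀ i < A, x i = 0) : psi m j x = 1 := by
  refine prod_eq_one fun k _ => ?_
  by_cases hk : k < A
  · rw [(rad_eq_one_iff hm k x).2 (hx k hk), one_pow]
  · rw [digit_eq_zero_of_lt (hj.trans_le (M_mono hm (not_lt.1 hk))), pow_zero]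

lemma norm_Dker_le (n : ℕ) (x : G m) : ‖Dker m n x‖ ≤ n :=
  (norm_sum_le _ _).trans (by simp [norm_psi])

/-- The unnormalised Fejér kernel `n K_n`. -/
def Dsum (m : ℕ → ℕ) (n : ℕ) (x : G m) : ℂ := ∑ k ∈ range n, Dker m k x

lemma norm_Dsum_eq (n : ℕ) (x : G m) : ‖Dsum m n x‖ = n * ‖Kker m n x‖ := by
  rcases Nat.eq_zero_or_pos n with rfl | hn
  · simp [Dsum]
  · rw [Kker, norm_mul, norm_inv, Complex.norm_natCast, ← mul_assoc,
      mul_inv_cancel₀ (by positivity), one_mul, Dsum]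

lemma norm_Dsum_le_sq (n : ℕ) (x : G m) : ‖Dsum m n x‖ ≤ n ^ 2 := by
  calc ‖Dsum m n x‖ ≤ ∑ k ∈ range n, ‖Dker m k x‖ := norm_sum_le _ _
    _ ≤ ∑ _k ∈ range n, (n : ℝ) :=
        sum_le_sum fun k hk => (norm_Dker_le k x).trans (by simpa using (mem_range.1 hk).le)
    _ = n ^ 2 := by simp [sq]

lemma Dsum_M_of_forall (hm : ∀ k, 2 ≤ m k) {A : ℕ} {x : G m} (hx : ∀ i < A, x i = 0) :
    Dsum m (M m A) x = ∑ k ∈ range (M m A), (k : ℂ) := by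
  refine sum_congr rfl fun k hk => ?_
  rw [Dker, sum_congr rfl fun j hj =>
    psi_eq_one_of_lt_M hm ((mem_range.1 hj).trans (mem_range.1 hk)) hx]
  simp

lemma M_mul_norm_Dker_M_le (hm : ∀ k, 2 ≤ m k) {A : ℕ} (hA : 1 ≤ A) (x : G m) :
    M m A * ‖Dker m (M m A) x‖ ≤ 4 * ‖Dsum m (M m A) x‖ := by
  rw [Dker_M hm]
  split_ifs with hx
  · have hM : 2 ≤ M m A := (M_mono hm hA).trans' (by simpa [M_succ] using hm 0)
    obtain ⟨K, hK⟩ : ∃ K, M m A = K + 2 := ⟨M m A - 2, by omega⟩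
    rw [Dsum_M_of_forall hm hx, ← Nat.cast_sum, Complex.norm_natCast, Complex.norm_natCast, hK]
    have hgauss := Finset.sum_range_id_mul_two (K + 2)
    rw [show K + 2 - 1 = K + 1 by omega] at hgauss
    have : (K + 2) * (K + 2) ≤ 4 * ∑ i ∈ range (K + 2), i := by nlinarith
    exact_mod_cast this
  · simp

lemma Dsum_mul_M_add (hm : ∀ k, 2 ≤ m k) {A a c : ℕ} (ha : a < m A) (hc : c ≤ M m A) (x : G m) :
    Dsum m (a * M m A + c) x
      = Dsum m (a * M m A) x + c * Dker m (a * M m A) x + rad m A x ^ a * Dsum m c x := by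
  rw [Dsum, sum_range_add,
    sum_congr rfl fun j hj => Dker_mul_M_add hm ha ((mem_range.1 hj).le.trans hc) x,
    sum_add_distrib, sum_const, card_range, nsmul_eq_mul, ← mul_sum, Dsum, Dsum, add_assoc]

lemma Dsum_mul_M (hm : ∀ k, 2 ≤ m k) {A a : ℕ} (ha : a ≤ m A) (x : G m) :
    Dsum m (a * M m A) x
      = ∑ t ∈ range a, (M m A * Dker m (t * M m A) x + rad m A x ^ t * Dsum m (M m A) x) := by
  induction a with
  | zero => simp [Dsum]
  | succ a ih =>
    rw [add_one_mul, Dsum_mul_M_add hm ha le_rfl, ih (by omega), sum_range_succ, add_assoc]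

lemma M_mul_norm_Dker_mul_M_le (hm : ∀ k, 2 ≤ m k) {A t : ℕ} (hA : 1 ≤ A) (ht : t ≤ m A)
    (x : G m) : M m A * ‖Dker m (t * M m A) x‖ ≤ 4 * m A * ‖Dsum m (M m A) x‖ := by
  have hgeom : ‖∑ s ∈ range t, rad m A x ^ s‖ ≤ m A :=
    (norm_sum_le _ _).trans (by simpa [norm_rad] using ht)
  rw [Dker_mul_M hm ht, norm_mul]
  calc M m A * (‖∑ s ∈ range t, rad m A x ^ s‖ * ‖Dker m (M m A) x‖)
      = ‖∑ s ∈ range t, rad m A x ^ s‖ * (M m A * ‖Dker m (M m A) x‖) := by ring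
    _ ≤ m A * (4 * ‖Dsum m (M m A) x‖) :=
        mul_le_mul hgeom (M_mul_norm_Dker_M_le hm hA x) (by positivity) (by positivity)
    _ = 4 * m A * ‖Dsum m (M m A) x‖ := by ring

lemma norm_Dsum_mul_M_add_le (hm : ∀ k, 2 ≤ m k) {A a c : ℕ} (hA : 1 ≤ A) (ha : a < m A)
    (hc : c ≤ M m A) (x : G m) :
    ‖Dsum m (a * M m A + c) x‖
      ≤ (4 * m A ^ 2 + 5 * m A) * ‖Dsum m (M m A) x‖ + ‖Dsum m c x‖ := by
  set L := ‖Dsum m (M m A) x‖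
  have hblock : ‖Dsum m (a * M m A) x‖ ≤ m A * ((4 * m A + 1) * L) := by
    rw [Dsum_mul_M hm ha.le]
    calc _ ≤ ∑ _t ∈ range a, (4 * m A + 1) * L := norm_sum_le_of_le _ fun t ht => ?_
      _ ≤ m A * ((4 * m A + 1) * L) := by
          rw [sum_const, card_range, nsmul_eq_mul]
          gcongr
    calc ‖(M m A : ℂ) * Dker m (t * M m A) x + rad m A x ^ t * Dsum m (M m A) x‖
        ≤ M m A * ‖Dker m (t * M m A) x‖ + L := (norm_add_le _ _).trans_eq (by
          rw [norm_mul, norm_mul, norm_pow, norm_rad, one_pow, one_mul, Complex.norm_natCast])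
      _ ≤ 4 * m A * L + L :=
          add_le_add_left (M_mul_norm_Dker_mul_M_le hm hA ((mem_range.1 ht).le.trans ha.le) x) L
      _ = (4 * m A + 1) * L := by ring
  have hmid : ‖(c : ℂ) * Dker m (a * M m A) x‖ ≤ 4 * m A * L := by
    rw [norm_mul, Complex.norm_natCast]
    exact (mul_le_mul_of_nonneg_right (by exact_mod_cast hc) (norm_nonneg _)).trans
      (M_mul_norm_Dker_mul_M_le hm hA ha.le x)
  rw [Dsum_mul_M_add hm ha hc]
  calc _ ≤ ‖Dsum m (a * M m A) x‖ + ‖(c : ℂ) * Dker m (a * M m A) x‖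
        + ‖rad m A x ^ a * Dsum m c x‖ := norm_add₃_le
    _ ≤ (4 * m A ^ 2 + 5 * m A) * L + ‖Dsum m c x‖ := by
        rw [norm_mul (rad m A x ^ a), norm_pow, norm_rad, one_pow, one_mul]
        linarith

lemma one_le_norm_Dsum_M_one (hm : ∀ k, 2 ≤ m k) (x : G m) : 1 ≤ ‖Dsum m (M m 1) x‖ := by
  by_cases hx : x 0 = 0
  · rw [Dsum_M_of_forall hm (A := 1) (by simpa using hx), ← Nat.cast_sum, Complex.norm_natCast]
    have h1 : 1 ∈ range (M m 1) := by rw [mem_range, M_succ, M_zero, mul_one]; linarith [hm 0]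
    exact_mod_cast single_le_sum (f := id) (fun _ _ => Nat.zero_le _) h1
  · set r := rad m 0 x
    have hr : r ≠ 1 := mt (rad_eq_one_iff hm 0 x).1 hx
    -- on the first block, `D_k` is the geometric sum `1 + r + ⋯ + r^(k-1)`
    have hD : ∀ k ≤ m 0, (r - 1) * Dker m k x = r ^ k - 1 := by
      intro k hk
      have := Dker_mul_M hm (A := 0) hk x
      simp only [M_zero, mul_one] at this
      rw [this, show Dker m 1 x = 1 by simp [Dker, psi, digit], mul_one, mul_comm, geom_sum_mul]
    have hL : (r - 1) * Dsum m (M m 1) x = -(m 0 : ℂ) := by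
      rw [M_succ, M_zero, mul_one, Dsum, mul_sum,
        sum_congr rfl fun k hk => hD k (mem_range.1 hk).le, sum_sub_distrib, sum_rad_pow hm,
        if_neg hx]
      simp
    have hr2 : ‖r - 1‖ ≤ 2 := (norm_sub_le _ _).trans (by simp [r, norm_rad]; norm_num)
    have hm0 : (2 : ℝ) ≤ m 0 := by exact_mod_cast hm 0
    have hnorm := congrArg norm hL
    rw [norm_mul, norm_neg, Complex.norm_natCast] at hnorm
    nlinarith [mul_nonneg (sub_nonneg.2 hr2) (norm_nonneg (Dsum m (M m 1) x))]

lemma exists_eq_mul_M_add (hm : ∀ k, 2 ≤ m k) {A k : ℕ} (hk : k ≤ M m (A + 1)) :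
    ∃ a < m A, ∃ c ≤ M m A, k = a * M m A + c := by
  rcases Nat.eq_zero_or_pos k with rfl | hk0
  · exact ⟨0, by linarith [hm A], 0, Nat.zero_le _, by simp⟩
  · refine ⟨(k - 1) / M m A, ?_, (k - 1) % M m A + 1, Nat.mod_lt _ (M_pos hm A), ?_⟩
    · rw [Nat.div_lt_iff_lt_mul (M_pos hm A)]
      rw [M_succ] at hk
      omega
    · have := Nat.div_add_mod' (k - 1) (M m A)
      omega

lemma norm_Dsum_le (hm : ∀ k, 2 ≤ m k) {B : ℕ} (hB : ∀ k, m k ≤ B) {A : ℕ} (hA : 1 ≤ A)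
    {k : ℕ} (hk : k ≤ M m (A + 1)) (x : G m) :
    ‖Dsum m k x‖ ≤ (5 * B ^ 2 + 5 * B) * ∑ j ∈ range (A + 1), ‖Dsum m (M m j) x‖ := by
  have hBm : ∀ j, (4 * m j ^ 2 + 5 * m j : ℝ) ≤ 4 * B ^ 2 + 5 * B := fun j => by
    have : (m j : ℝ) ≤ B := by exact_mod_cast hB j
    gcongr
  induction A, hA using Nat.le_induction generalizing k with
  | base =>
    obtain ⟨a, ha, c, hc, rfl⟩ := exists_eq_mul_M_add hm hk
    have hcB : (c : ℝ) ≤ B := by exact_mod_cast hc.trans (by simpa [M_succ] using hB 0)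
    have hLc : ‖Dsum m c x‖ ≤ B ^ 2 * ‖Dsum m (M m 1) x‖ :=
      calc ‖Dsum m c x‖ ≤ c ^ 2 := norm_Dsum_le_sq c x
        _ ≤ B ^ 2 * 1 := by rw [mul_one]; gcongr
        _ ≤ B ^ 2 * ‖Dsum m (M m 1) x‖ := by gcongr; exact one_le_norm_Dsum_M_one hm x
    calc _ ≤ (4 * m 1 ^ 2 + 5 * m 1) * ‖Dsum m (M m 1) x‖ + ‖Dsum m c x‖ :=
          norm_Dsum_mul_M_add_le hm le_rfl ha hc x
      _ ≤ (4 * B ^ 2 + 5 * B) * ‖Dsum m (M m 1) x‖ + B ^ 2 * ‖Dsum m (M m 1) x‖ :=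
          add_le_add (mul_le_mul_of_nonneg_right (hBm 1) (norm_nonneg _)) hLc
      _ = (5 * B ^ 2 + 5 * B) * ‖Dsum m (M m 1) x‖ := by ring
      _ ≤ _ := by
          gcongr
          exact single_le_sum (f := fun j => ‖Dsum m (M m j) x‖) (fun _ _ => norm_nonneg _)
            (by simp)
  | succ A hA ih =>
    obtain ⟨a, ha, c, hc, rfl⟩ := exists_eq_mul_M_add hm hk
    calc _ ≤ (4 * m (A + 1) ^ 2 + 5 * m (A + 1)) * ‖Dsum m (M m (A + 1)) x‖ + ‖Dsum m c x‖ :=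
          norm_Dsum_mul_M_add_le hm (by omega) ha hc x
      _ ≤ (5 * B ^ 2 + 5 * B) * ‖Dsum m (M m (A + 1)) x‖
          + (5 * B ^ 2 + 5 * B) * ∑ j ∈ range (A + 1), ‖Dsum m (M m j) x‖ :=
          add_le_add (mul_le_mul_of_nonneg_right (by linarith [hBm (A + 1), sq_nonneg (B : ℝ)])
            (norm_nonneg _)) (ih hc)
      _ = _ := by rw [sum_range_succ _ (A + 1)]; ring

lemma digit_ne_zero_of_M_le (hm : ∀ k, 2 ≤ m k) {n j : ℕ} (h1 : M m j ≤ n)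
    (h2 : n < M m (j + 1)) : digit m n j ≠ 0 := by
  have hMj := M_pos hm j
  rw [digit, Nat.mod_eq_of_lt ((Nat.div_lt_iff_lt_mul hMj).2 (by rwa [M_succ] at h2))]
  exact (Nat.div_pos h1 hMj).ne'

lemma exists_M_le_lt_M_succ (hm : ∀ k, 2 ≤ m k) {n : ℕ} (hn : 0 < n) :
    ∃ j, M m j ≤ n ∧ n < M m (j + 1) := by
  have hex : ∃ j, n < M m (j + 1) := ⟨n, (Nat.lt_succ_self n).trans (lt_M hm _)⟩
  refine ⟨Nat.find hex, ?_, Nat.find_spec hex⟩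
  rcases Nat.eq_zero_or_pos (Nat.find hex) with h | h
  · rw [h, M_zero]; exact hn
  · obtain ⟨j, hj⟩ : ∃ j, Nat.find hex = j + 1 := ⟨_, (Nat.succ_pred_eq_of_pos h).symm⟩
    rw [hj]
    exact not_lt.1 (Nat.find_min hex (by omega : j < Nat.find hex))

lemma lt_M_ord_succ (hm : ∀ k, 2 ≤ m k) {n : ℕ} (hn : 0 < n) : n < M m (ord m n + 1) := by
  obtain ⟨j, hj1, hj2⟩ := exists_M_le_lt_M_succ hm hn
  have hj : j ≤ ord m n :=
    Nat.le_findGreatest ((lt_M hm j).le.trans hj1) (digit_ne_zero_of_M_le hm hj1 hj2)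
  exact hj2.trans_le (M_mono hm (by omega))

lemma le_ord (hm : ∀ k, 2 ≤ m k) {N n : ℕ} (h : M m N ≤ n) : N ≤ ord m n := by
  by_contra! hlt
  exact (lt_M_ord_succ hm ((M_pos hm N).trans_le h)).not_ge ((M_mono hm hlt).trans h)

/-- Abel's inequality. -/
lemma norm_sum_smul_le_of_antitone {E : Type*} [SeminormedAddCommGroup E] [NormedSpace ℝ E]
    {a : ℕ → ℝ} (ha : Antitone a) {b : ℕ → E} {n : ℕ} {β : ℝ} (han : 0 ≤ a n)
    (hb : ∀ k ≤ n, ‖∑ i ∈ range k, b i‖ ≤ β) :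
    ‖∑ i ∈ range n, a i • b i‖ ≤ a 0 * β := by
  have hsummation : ∀ k ≤ n,
      ‖∑ i ∈ range k, a i • b i - a k • ∑ i ∈ range k, b i‖ ≤ (a 0 - a k) * β := by
    intro k hk
    induction k with
    | zero => simp
    | succ k ih =>
      have hstep : ∑ i ∈ range (k + 1), a i • b i - a (k + 1) • ∑ i ∈ range (k + 1), b i
          = (∑ i ∈ range k, a i • b i - a k • ∑ i ∈ range k, b i)
            + (a k - a (k + 1)) • ∑ i ∈ range (k + 1), b i := by
        simp only [sum_range_succ, sub_smul, smul_add]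
        abel
      have hak : 0 ≤ a k - a (k + 1) := sub_nonneg.2 (ha k.le_succ)
      calc _ ≤ (a 0 - a k) * β + (a k - a (k + 1)) * β := by
            rw [hstep]
            refine (norm_add_le _ _).trans (add_le_add (ih (by omega)) ?_)
            rw [norm_smul, Real.norm_of_nonneg hak]
            exact mul_le_mul_of_nonneg_left (hb _ hk) hak
        _ = (a 0 - a (k + 1)) * β := by ring
  calc ‖∑ i ∈ range n, a i • b i‖
      ≤ ‖a n • ∑ i ∈ range n, b i‖ + ‖∑ i ∈ range n, a i • b i - a n • ∑ i ∈ range n, b i‖ :=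
        norm_le_norm_add_norm_sub' _ _
    _ ≤ a n * β + (a 0 - a n) * β := by
        gcongr
        · rw [norm_smul, Real.norm_of_nonneg han]
          exact mul_le_mul_of_nonneg_left (hb n le_rfl) han
        · exact hsummation n le_rfl
    _ = a 0 * β := by ring

lemma norm_sum_Icc_mul_le {q : ℕ → ℝ} (hq : ∀ k, 0 ≤ q k) (hmono : Monotone q) (f : ℕ → ℂ)
    {l n : ℕ} {β : ℝ} (hl : l ≤ n + 1)
    (hf : ∀ k, l ≤ k → k ≤ n + 1 → ‖∑ j ∈ range k, f j‖ ≤ β) :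
    ‖∑ j ∈ Icc l n, (q (n - j) : ℂ) * f j‖ ≤ q (n - l) * (2 * β) := by
  have hreindex : ∑ j ∈ Icc l n, (q (n - j) : ℂ) * f j
      = ∑ i ∈ range (n + 1 - l), q (n - l - i) • f (l + i) := by
    rw [← Ico_add_one_right_eq_Icc, sum_Ico_eq_sum_range]
    exact sum_congr rfl fun i _ => by rw [Complex.real_smul, Nat.sub_sub]
  rw [hreindex]
  refine norm_sum_smul_le_of_antitone (fun i j hij => hmono (by omega)) (hq _) fun k hk => ?_
  rw [← sum_range_add_sub_sum_range]
  calc _ ≤ ‖∑ j ∈ range (l + k), f j‖ + ‖∑ j ∈ range l, f j‖ := norm_sub_le _ _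
    _ ≤ β + β := add_le_add (hf _ (by omega) (by omega)) (hf l le_rfl hl)
    _ = 2 * β := by ring

lemma nat_mul_le_Q {q : ℕ → ℝ} (hq : ∀ k, 0 ≤ q k) (hmono : Monotone q) {l n : ℕ} (hl : l ≤ n) :
    l * q (n - l) ≤ Q q n :=
  calc (l : ℝ) * q (n - l) = ∑ _k ∈ Ico (n - l) n, q (n - l) := by simp [Nat.sub_sub_self hl]
    _ ≤ ∑ k ∈ Ico (n - l) n, q k := sum_le_sum fun k hk => hmono (mem_Ico.1 hk).1
    _ ≤ Q q n := sum_le_sum_of_subset_of_nonneg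
        (by rw [range_eq_Ico]; exact Ico_subset_Ico_left (Nat.zero_le _)) fun k _ _ => hq k

theorem statement12_general (hm : ∀ k, 2 ≤ m k) (hbdd : ∃ B, ∀ k, m k ≤ B)
    (q : ℕ → ℝ) (hq : ∀ k, 0 ≤ q k) (hmono : Monotone q) :
    ∃ c : ℝ, ∀ N : ℕ, 0 < N → ∀ n : ℕ, M m N ≤ n → ∀ x : G m,
      ‖(Q q n : ℂ)⁻¹ * ∑ j ∈ Finset.Icc (M m N) n, (q (n - j) : ℂ) * Dker m j x‖ ≤
        c / (M m N) * ∑ j ∈ Finset.range (ord m n + 1), (M m j : ℝ) * ‖Kker m (M m j) x‖ := by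
  obtain ⟨B, hB⟩ := hbdd
  set C : ℝ := 5 * B ^ 2 + 5 * B
  refine ⟨2 * C, fun N hN n hn x => ?_⟩
  set T := ∑ j ∈ range (ord m n + 1), ‖Dsum m (M m j) x‖
  have hA : 1 ≤ ord m n := le_ord hm ((M_mono hm hN).trans hn)
  have hnA : n < M m (ord m n + 1) := lt_M_ord_succ hm ((M_pos hm N).trans_le hn)
  have hsum := norm_sum_Icc_mul_le hq hmono (fun j => Dker m j x) (l := M m N) (n := n)
    (β := C * T) (by omega)
    fun k _ hk => norm_Dsum_le hm hB hA (by omega) x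
  have hQ := nat_mul_le_Q hq hmono hn
  have hQ0 : 0 ≤ Q q n := (mul_nonneg (Nat.cast_nonneg _) (hq _)).trans hQ
  have hl : (0 : ℝ) < M m N := by exact_mod_cast M_pos hm N
  simp only [← norm_Dsum_eq]
  rw [norm_mul, norm_inv, Complex.norm_real, Real.norm_of_nonneg hQ0]
  calc _ ≤ (Q q n)⁻¹ * (q (n - M m N) * (2 * (C * T))) := by gcongr
    _ = (Q q n)⁻¹ * (M m N * q (n - M m N)) * (2 * C / M m N * T) := by field_simp
    _ ≤ 1 * (2 * C / M m N * T) := by gcongr; exact inv_mul_le_one_of_le₀ hQ hQ0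
    _ = 2 * C / M m N * T := one_mul _

theorem statement12 (hm : ∀ k, 2 ≤ m k) (hbdd : ∃ B, ∀ k, m k ≤ B)
    (q : ℕ → ℝ) (hq : ∀ k, 0 ≤ q k) (hq0 : 0 < q 0) (hmono : Monotone q) :
    ∃ c : ℝ, ∀ N : ℕ, 0 < N → ∀ n : ℕ, M m N ≤ n → ∀ x : G m,
      ‖(Q q n : ℂ)⁻¹ * ∑ j ∈ Finset.Icc (M m N) n, (q (n - j) : ℂ) * Dker m j x‖ ≤
        c / (M m N) * ∑ j ∈ Finset.range (ord m n + 1), (M m j : ℝ) * ‖Kker m (M m j) x‖ :=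
  statement12_general hm hbdd q hq hmono

end Vilenkin
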